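/- arXiv:0810.5174 — 3 statements merged into one kernel-verified Lean document; each statement's English description precedes it below -/
import Mathlib

section
/- Hadamard's lemma: let n ≥ 0 and let f : ℝ^{n+1} → ℝ be a smooth function such that f(x) = 0 for every point x = (x₁, …, x_{n+1}) with x₁ = 0. Then there exists a smooth function g : ℝ^{n+1} → ℝ such that f(x) = x₁ · g(x) for all x ∈ ℝ^{n+1}. -/
/-!
Write `x = π x + ℓ x • v` with `π x ∈ ker ℓ`. Since `f` vanishes at `π x`, the fundamental theorem
of calculus along the segment from `π x` to `x` gives
`f x = ℓ x • ∫ t in 0..1, Df (π x + (t * ℓ x) • v) v`,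
and this integral depends smoothly on `x` by repeated differentiation under the integral sign.
For `ℓ = x ↦ x 0` and `v = Pi.single 0 1` this is Hadamard's lemma.
-/

open MeasureTheory Set Metric Function
open scoped ContDiff

theorem map_add_eq_add_integral_fderiv {E F : Type*} [NormedAddCommGroup E] [NormedSpace ℝ E]
    [NormedAddCommGroup F] [NormedSpace ℝ F] [CompleteSpace F] {f : E → F} (hf : ContDiff ℝ 1 f)
    (x y : E) :
    f (x + y) = f x + ∫ t in (0 : ℝ)..1, fderiv ℝ f (x + t • y) y := by
  simpa [iteratedFDeriv_one_apply] using
    map_add_eq_sum_add_integral_iteratedFDeriv (n := 0) (x := x) (y := y) fun _ _ => hf.contDiffAt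

universe u

section ParametricIntegral

-- `E` and `F` share a universe because the induction on the smoothness order replaces `F`
-- by `E →L[ℝ] F`.

variable {E F : Type u} [NormedAddCommGroup E] [NormedSpace ℝ E] [ProperSpace E]
  [NormedAddCommGroup F] [NormedSpace ℝ F] {f : E → ℝ → F}

theorem hasFDerivAt_intervalIntegral_of_contDiff (hf : ContDiff ℝ 1 (uncurry f)) (a b : ℝ)
    (x₀ : E) :
    HasFDerivAt (fun x => ∫ t in a..b, f x t)
      (∫ t in a..b, fderiv ℝ (uncurry f) (x₀, t) ∘L .inl ℝ E ℝ) x₀ := by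
  set D : E → ℝ → E →L[ℝ] F := fun x t => fderiv ℝ (uncurry f) (x, t) ∘L .inl ℝ E ℝ
  have hD : Continuous (uncurry D) := (hf.continuous_fderiv one_ne_zero).clm_comp continuous_const
  obtain ⟨M, hM⟩ := ((isCompact_closedBall x₀ 1).prod isCompact_uIcc).exists_bound_of_continuousOn
    hD.continuousOn
  refine intervalIntegral.hasFDerivAt_integral_of_dominated_of_fderiv_le (bound := fun _ => M)
    (F' := D) (ball_mem_nhds x₀ one_pos) ?_ ?_ ?_ ?_ intervalIntegrable_const ?_
  · exact .of_forall fun x => (hf.continuous.comp (.prodMk_right x)).aestronglyMeasurable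
  · exact (hf.continuous.comp (.prodMk_right x₀)).intervalIntegrable _ _
  · exact (hD.comp (.prodMk_right x₀)).aestronglyMeasurable
  · exact ae_of_all _ fun t ht x hx => hM (x, t) ⟨ball_subset_closedBall hx, uIoc_subset_uIcc ht⟩
  · refine ae_of_all _ fun t _ x _ => ?_
    exact (hf.differentiable one_ne_zero (x, t)).hasFDerivAt.comp x
      (hasFDerivAt_prodMk_left (𝕜 := ℝ) x t :)

theorem contDiff_intervalIntegral_of_contDiff {n : ℕ} (hf : ContDiff ℝ n (uncurry f)) (a b : ℝ) :
    ContDiff ℝ n fun x => ∫ t in a..b, f x t := by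
  induction n generalizing F with
  | zero =>
    exact contDiff_zero.2 <|
      intervalIntegral.continuous_parametric_intervalIntegral_of_continuous' (contDiff_zero.1 hf) a b
  | succ n ih =>
    have hf₁ : ContDiff ℝ 1 (uncurry f) := hf.of_le (by exact_mod_cast Nat.le_add_left 1 n)
    have hD : ContDiff ℝ n (uncurry fun x t => fderiv ℝ (uncurry f) (x, t) ∘L .inl ℝ E ℝ) :=
      (hf.fderiv_right (by push_cast; rfl)).clm_comp contDiff_const
    push_cast
    refine contDiff_succ_iff_fderiv.2
      ⟨fun x => (hasFDerivAt_intervalIntegral_of_contDiff hf₁ a b x).differentiableAt, by simp, ?_⟩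
    rw [funext fun x => (hasFDerivAt_intervalIntegral_of_contDiff hf₁ a b x).fderiv]
    exact ih hD

end ParametricIntegral

theorem exists_contDiff_eq_smul_of_eq_zero_on_ker {E F : Type u} [NormedAddCommGroup E]
    [NormedSpace ℝ E] [ProperSpace E] [NormedAddCommGroup F] [NormedSpace ℝ F] [CompleteSpace F]
    {f : E → F} (hf : ContDiff ℝ ∞ f) (ℓ : E →L[ℝ] ℝ) {v : E} (hv : ℓ v = 1)
    (hvanish : ∀ x, ℓ x = 0 → f x = 0) :
    ∃ g : E → F, ContDiff ℝ ∞ g ∧ ∀ x, f x = ℓ x • g x := by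
  set π : E → E := fun x => x - ℓ x • v
  refine ⟨fun x => ∫ t in (0 : ℝ)..1, fderiv ℝ f (π x + (t * ℓ x) • v) v, ?_, fun x => ?_⟩
  · have hf' : ContDiff ℝ ∞ (fderiv ℝ f) := hf.fderiv_right (by simp)
    refine contDiff_infty.2 fun n => contDiff_intervalIntegral_of_contDiff ?_ 0 1
    exact (hf'.comp (by fun_prop)).clm_apply contDiff_const |>.of_le (mod_cast le_top)
  · have hπ : ℓ (π x) = 0 := by simp [π, hv]
    calc f x = f (π x + ℓ x • v) := by simp [π]
      _ = ∫ t in (0 : ℝ)..1, fderiv ℝ f (π x + t • ℓ x • v) (ℓ x • v) := by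
        rw [map_add_eq_add_integral_fderiv (hf.of_le (by simp)), hvanish _ hπ, zero_add]
      _ = ℓ x • ∫ t in (0 : ℝ)..1, fderiv ℝ f (π x + (t * ℓ x) • v) v := by
        simp [smul_smul, ← intervalIntegral.integral_smul]

/-- **Hadamard's lemma.** If `f : ℝ^{n+1} → ℝ` is smooth and vanishes on the hyperplane
`{x | x₁ = 0}`, then there is a smooth `g` with `f x = x₁ * g x` for all `x`. -/
theorem hadamard_lemma (n : ℕ) (f : (Fin (n + 1) → ℝ) → ℝ)
    (hf : ContDiff ℝ (⊤ : ℕ∞) f)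
    (hvanish : ∀ x : Fin (n + 1) → ℝ, x 0 = 0 → f x = 0) :
    ∃ g : (Fin (n + 1) → ℝ) → ℝ,
      ContDiff ℝ (⊤ : ℕ∞) g ∧ ∀ x : Fin (n + 1) → ℝ, f x = x 0 * g x :=
  exists_contDiff_eq_smul_of_eq_zero_on_ker hf (.proj 0) (v := Pi.single 0 1) (by simp) hvanish
end

section
/- For natural numbers 1 ≤ k ≤ n, the coordinate functions x₁, …, x_k form a regular sequence in the ring C^∞(ℝⁿ): for each 0 ≤ i < k, the image of x_{i+1} in the quotient ring C^∞(ℝⁿ)/(x₁, …, x_i) is not a zero divisor, and the quotient C^∞(ℝⁿ)/(x₁, …, x_k) is not the zero ring. -/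
noncomputable section

/-- The subalgebra of smooth (`C^∞`) real-valued functions on a normed real vector space `E`. -/
def SmoothAlg (E : Type) [NormedAddCommGroup E] [NormedSpace ℝ E] :
    Subalgebra ℝ (E → ℝ) where
  carrier := {f | ContDiff ℝ (⊤ : ℕ∞) f}
  mul_mem' {a b} ha hb := by
    have ha' : ContDiff ℝ (⊤ : ℕ∞) a := ha
    have hb' : ContDiff ℝ (⊤ : ℕ∞) b := hb
    show ContDiff ℝ (⊤ : ℕ∞) (a * b)
    exact ha'.mul hb'
  add_mem' {a b} ha hb := by
    have ha' : ContDiff ℝ (⊤ : ℕ∞) a := ha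
    have hb' : ContDiff ℝ (⊤ : ℕ∞) b := hb
    show ContDiff ℝ (⊤ : ℕ∞) (a + b)
    exact ha'.add hb'
  algebraMap_mem' r := by
    show ContDiff ℝ (⊤ : ℕ∞) (fun _ => r)
    exact contDiff_const

theorem mem_smoothAlg {E : Type} [NormedAddCommGroup E] [NormedSpace ℝ E]
    {f : E → ℝ} : f ∈ SmoothAlg E ↔ ContDiff ℝ (⊤ : ℕ∞) f := Iff.rfl

/-- The `i`-th coordinate function, as an element of `C^∞(ℝⁿ)`. -/
def coordFn (n : ℕ) (i : Fin n) : SmoothAlg (Fin n → ℝ) :=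
  ⟨fun x => x i, mem_smoothAlg.mpr
    ((ContinuousLinearMap.proj (R := ℝ) (φ := fun _ : Fin n => ℝ) i).contDiff)⟩

/-- The linear inclusion `ℝ^{n-k} → ℝⁿ`, `y ↦ (0, …, 0, y)`, of the coordinate plane
`{x₁ = ⋯ = x_k = 0}`. -/
def planeIncl (n k : ℕ) (hk : k ≤ n) : (Fin (n - k) → ℝ) →L[ℝ] (Fin n → ℝ) :=
  ContinuousLinearMap.pi fun i : Fin n =>
    if _h : (i : ℕ) < k then 0
    else ContinuousLinearMap.proj (R := ℝ) (φ := fun _ : Fin (n - k) => ℝ)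
      (⟨(i : ℕ) - k, by omega⟩ : Fin (n - k))

/-- Precomposition with a fixed smooth map, as a ring homomorphism between rings of
smooth functions. -/
def precompHom {E F : Type} [NormedAddCommGroup E] [NormedSpace ℝ E]
    [NormedAddCommGroup F] [NormedSpace ℝ F] (g : E → F) (hg : ContDiff ℝ (⊤ : ℕ∞) g) :
    SmoothAlg F →+* SmoothAlg E where
  toFun f := ⟨f.1 ∘ g, mem_smoothAlg.mpr ((mem_smoothAlg.mp f.2).comp hg)⟩
  map_one' := rfl
  map_mul' _ _ := rfl
  map_zero' := rfl
  map_add' _ _ := rfl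

/-- Restriction of smooth functions on `ℝⁿ` to the coordinate plane
`{x₁ = ⋯ = x_k = 0} ≅ ℝ^{n-k}`. -/
def restrictHom (n k : ℕ) (hk : k ≤ n) :
    SmoothAlg (Fin n → ℝ) →+* SmoothAlg (Fin (n - k) → ℝ) :=
  precompHom (planeIncl n k hk) (planeIncl n k hk).contDiff

end

/-! By Hadamard's lemma the ideal `(x_j : j ∈ s)` of `C^∞(ℝⁿ)` consists exactly of the smooth
functions vanishing on the coordinate plane `{x_j = 0 : j ∈ s}`: such an `f` satisfies
`f x = ∑_{j ∈ s} x_j g_j x` with `g_j x = ∫₀¹ ∂_j f (x' + t (x - x')) dt`, where `x'` is the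
projection of `x` onto the plane, and the `g_j` are smooth by differentiation under the integral
sign. So if `x_i g` lies in the ideal and `i ∉ s`, then `g` vanishes on the dense part
`{x_i ≠ 0}` of the plane, hence on all of it by continuity; and `1` is not in the ideal since it
does not vanish at `0`. -/

open Function MeasureTheory Set
open scoped ContDiff

universe u

section ParametricIntegral

variable {H F : Type u} [NormedAddCommGroup H] [NormedSpace ℝ H] [ProperSpace H]
  [NormedAddCommGroup F] [NormedSpace ℝ F]

theorem hasFDerivAt_intervalIntegral_of_contDiff_uncurry {φ : H → ℝ → F}
    (hφ : ContDiff ℝ 1 (uncurry φ)) (a b : ℝ) (x₀ : H) :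
    HasFDerivAt (fun x => ∫ t in a..b, φ x t)
      (∫ t in a..b, (fderiv ℝ (uncurry φ) (x₀, t)).comp (ContinuousLinearMap.inl ℝ H ℝ)) x₀ := by
  set φ' : H → ℝ → H →L[ℝ] F := fun x t =>
    (fderiv ℝ (uncurry φ) (x, t)).comp (ContinuousLinearMap.inl ℝ H ℝ)
  have hφ' : Continuous (uncurry φ') :=
    (hφ.continuous_fderiv one_ne_zero).clm_comp continuous_const
  obtain ⟨C, hC⟩ : ∃ C, ∀ p ∈ Metric.closedBall x₀ 1 ×ˢ uIcc a b, ‖uncurry φ' p‖ ≤ C := by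
    obtain ⟨C, hC⟩ := ((isCompact_closedBall x₀ 1).prod isCompact_uIcc).bddAbove_image
      hφ'.norm.continuousOn
    exact ⟨C, fun p hp => hC (mem_image_of_mem _ hp)⟩
  refine intervalIntegral.hasFDerivAt_integral_of_dominated_of_fderiv_le (bound := fun _ => C)
    (Metric.ball_mem_nhds x₀ one_pos)
    (.of_forall fun x => (hφ.continuous.comp (Continuous.prodMk_right x)).aestronglyMeasurable)
    ((hφ.continuous.comp (Continuous.prodMk_right x₀)).intervalIntegrable _ _)
    (hφ'.comp (Continuous.prodMk_right x₀)).aestronglyMeasurable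
    (.of_forall fun t ht x hx => hC (x, t) ⟨Metric.ball_subset_closedBall hx, uIoc_subset_uIcc ht⟩)
    intervalIntegrable_const (.of_forall fun t _ x _ => ?_)
  exact ((hφ.differentiable one_ne_zero (x, t)).hasFDerivAt).comp x (hasFDerivAt_prodMk_left x t)

variable [CompleteSpace F]

theorem contDiff_intervalIntegral_of_contDiff_uncurry_nat (m : ℕ) {φ : H → ℝ → F}
    (hφ : ContDiff ℝ ∞ (uncurry φ)) (a b : ℝ) :
    ContDiff ℝ m (fun x => ∫ t in a..b, φ x t) := by
  induction m generalizing F with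
  | zero =>
    simpa using
      intervalIntegral.continuous_parametric_intervalIntegral_of_continuous' hφ.continuous a b
  | succ m ih =>
    have hφ1 : ContDiff ℝ 1 (uncurry φ) := hφ.of_le (by simp)
    rw [Nat.cast_succ, contDiff_succ_iff_fderiv]
    refine ⟨fun x => (hasFDerivAt_intervalIntegral_of_contDiff_uncurry hφ1 a b x).differentiableAt,
      by simp, ?_⟩
    rw [funext fun x => (hasFDerivAt_intervalIntegral_of_contDiff_uncurry hφ1 a b x).fderiv]
    exact ih ((hφ.fderiv_right (by simp)).clm_comp contDiff_const)

theorem contDiff_intervalIntegral_of_contDiff_uncurry {φ : H → ℝ → F}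
    (hφ : ContDiff ℝ ∞ (uncurry φ)) (a b : ℝ) :
    ContDiff ℝ ∞ (fun x => ∫ t in a..b, φ x t) :=
  contDiff_infty.2 fun m => contDiff_intervalIntegral_of_contDiff_uncurry_nat m hφ a b

end ParametricIntegral

section Hadamard

variable {E F : Type u} [NormedAddCommGroup E] [NormedSpace ℝ E]
  [NormedAddCommGroup F] [NormedSpace ℝ F] [CompleteSpace F] {f : E → F}

theorem sub_eq_intervalIntegral_fderiv_apply (hf : ContDiff ℝ 1 f) (a v : E) :
    f (a + v) - f a = (∫ t in (0 : ℝ)..1, fderiv ℝ f (a + t • v)) v := by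
  have hline : Continuous fun t : ℝ => a + t • v := by fun_prop
  have hint : IntervalIntegrable (fun t : ℝ => fderiv ℝ f (a + t • v)) volume 0 1 :=
    ((hf.continuous_fderiv one_ne_zero).comp hline).intervalIntegrable _ _
  rw [ContinuousLinearMap.intervalIntegral_apply hint,
    intervalIntegral.integral_eq_sub_of_hasDerivAt (f := fun t : ℝ => f (a + t • v))]
  · simp
  · intro t _
    simpa [comp_def] using ((hf.differentiable one_ne_zero _).hasFDerivAt).comp_hasDerivAt t
      (((hasDerivAt_id t).smul_const v).const_add a)
  · exact (((hf.continuous_fderiv one_ne_zero).comp hline).clm_apply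
      continuous_const).intervalIntegrable _ _

theorem contDiff_intervalIntegral_fderiv [ProperSpace E] (hf : ContDiff ℝ ∞ f) :
    ContDiff ℝ ∞ fun p : E × E => ∫ t in (0 : ℝ)..1, fderiv ℝ f (p.1 + t • p.2) :=
  contDiff_intervalIntegral_of_contDiff_uncurry
    ((hf.fderiv_right le_rfl).comp (by fun_prop)) 0 1

end Hadamard

section CoordinateIdeals

variable {n : ℕ} {s : Set (Fin n)} {f : SmoothAlg (Fin n → ℝ)}

@[simp]
theorem coordFn_apply (i : Fin n) (x : Fin n → ℝ) : (coordFn n i : (Fin n → ℝ) → ℝ) x = x i :=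
  rfl

theorem apply_eq_zero_of_mem_span_coordFn (hf : f ∈ Ideal.span (coordFn n '' s))
    {x : Fin n → ℝ} (hx : ∀ j ∈ s, x j = 0) : (f : (Fin n → ℝ) → ℝ) x = 0 := by
  let eval : SmoothAlg (Fin n → ℝ) →+* ℝ :=
    (Pi.evalRingHom (fun _ => ℝ) x).comp (SmoothAlg (Fin n → ℝ)).val.toRingHom
  have hle : Ideal.span (coordFn n '' s) ≤ RingHom.ker eval :=
    Ideal.span_le.2 (by rintro _ ⟨j, hj, rfl⟩; exact hx j hj)
  exact hle hf

theorem contDiff_indicator_apply : ContDiff ℝ ∞ fun x : Fin n → ℝ => s.indicator x := by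
  refine contDiff_pi.2 fun j => ?_
  by_cases hj : j ∈ s
  · simpa [indicator_of_mem hj] using contDiff_apply ℝ ℝ j
  · simpa [indicator_of_notMem hj] using contDiff_const

theorem mem_span_coordFn_of_forall
    (hf : ∀ x : Fin n → ℝ, (∀ j ∈ s, x j = 0) → (f : (Fin n → ℝ) → ℝ) x = 0) :
    f ∈ Ideal.span (coordFn n '' s) := by
  set G := fun p : (Fin n → ℝ) × (Fin n → ℝ) =>
    ∫ t in (0 : ℝ)..1, fderiv ℝ (f : (Fin n → ℝ) → ℝ) (p.1 + t • p.2)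
  have hG : ContDiff ℝ ∞ G := contDiff_intervalIntegral_fderiv (mem_smoothAlg.1 f.2)
  set Q := fun x : Fin n → ℝ => s.indicator x
  set g : Fin n → (Fin n → ℝ) → ℝ := fun j x =>
    G (x - Q x, Q x) fun k => if j = k then 1 else 0
  have hg : ∀ j, ContDiff ℝ ∞ (g j) := fun j =>
    (hG.comp ((contDiff_id.sub contDiff_indicator_apply).prodMk contDiff_indicator_apply)).clm_apply
      contDiff_const
  -- Hadamard's lemma along the segment from `x - Q x`, where `f` vanishes, to `x`.
  have hexpand : ∀ x, (f : (Fin n → ℝ) → ℝ) x = ∑ j, Q x j * g j x := fun x =>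
    calc (f : (Fin n → ℝ) → ℝ) x
        = f.1 (x - Q x + Q x) - f.1 (x - Q x) := by
          rw [sub_add_cancel, hf (x - Q x) fun j hj => by simp [Q, indicator_of_mem hj], sub_zero]
      _ = G (x - Q x, Q x) (Q x) :=
          sub_eq_intervalIntegral_fderiv_apply ((mem_smoothAlg.1 f.2).of_le (by simp)) _ _
      _ = ∑ j, Q x j * g j x := (G (x - Q x, Q x)).toLinearMap.pi_apply_eq_sum_univ (Q x)
  have hf_eq : f = ∑ j, s.indicator (coordFn n) j * ⟨g j, mem_smoothAlg.2 (hg j)⟩ := by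
    refine Subtype.ext (funext fun x => ?_)
    rw [hexpand x, AddSubmonoidClass.coe_finsetSum, Finset.sum_apply]
    refine Finset.sum_congr rfl fun j _ => ?_
    by_cases hj : j ∈ s <;> simp [Q, hj]
  rw [hf_eq]
  refine Ideal.sum_mem _ fun j _ => Ideal.mul_mem_right _ _ ?_
  by_cases hj : j ∈ s
  · simpa [indicator_of_mem hj] using Ideal.subset_span (mem_image_of_mem _ hj)
  · simp [indicator_of_notMem hj]

theorem mem_span_coordFn_iff :
    f ∈ Ideal.span (coordFn n '' s) ↔
      ∀ x : Fin n → ℝ, (∀ j ∈ s, x j = 0) → (f : (Fin n → ℝ) → ℝ) x = 0 :=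
  ⟨fun hf _ hx => apply_eq_zero_of_mem_span_coordFn hf hx, mem_span_coordFn_of_forall⟩

theorem apply_eq_zero_of_mul_coord_apply_eq_zero {i : Fin n} (hi : i ∉ s)
    {g : (Fin n → ℝ) → ℝ} (hg : Continuous g)
    (h : ∀ x : Fin n → ℝ, (∀ j ∈ s, x j = 0) → g x * x i = 0)
    {x : Fin n → ℝ} (hx : ∀ j ∈ s, x j = 0) : g x = 0 := by
  have hcont : Continuous fun ε : ℝ => g (update x i ε) :=
    hg.comp (continuous_const.update i continuous_id)
  have hvanish : EqOn (fun ε : ℝ => g (update x i ε)) (fun _ => 0) {0}ᶜ := fun ε hε => by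
    have hmul := h (update x i ε) fun j hj => by
      rw [update_of_ne (ne_of_mem_of_not_mem hj hi)]
      exact hx j hj
    simpa [show ε ≠ 0 from hε] using hmul
  simpa using congr_fun (hcont.ext_on (dense_compl_singleton 0) continuous_const hvanish) (x i)

theorem mk_coordFn_mem_nonZeroDivisors {i : Fin n} (hi : i ∉ s) :
    Ideal.Quotient.mk (Ideal.span (coordFn n '' s)) (coordFn n i) ∈
      nonZeroDivisors (SmoothAlg (Fin n → ℝ) ⧸ Ideal.span (coordFn n '' s)) := by
  refine (mem_nonZeroDivisors_iff_right
    (M₀ := SmoothAlg (Fin n → ℝ) ⧸ Ideal.span (coordFn n '' s))).2 fun z hz => ?_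
  obtain ⟨g, rfl⟩ := Ideal.Quotient.mk_surjective z
  rw [← map_mul, Ideal.Quotient.eq_zero_iff_mem, mem_span_coordFn_iff] at hz
  rw [Ideal.Quotient.eq_zero_iff_mem, mem_span_coordFn_iff]
  exact fun x hx =>
    apply_eq_zero_of_mul_coord_apply_eq_zero hi (mem_smoothAlg.1 g.2).continuous hz hx

theorem nontrivial_quotient_span_coordFn :
    Nontrivial (SmoothAlg (Fin n → ℝ) ⧸ Ideal.span (coordFn n '' s)) := by
  refine Ideal.Quotient.nontrivial_iff.2 ((Ideal.ne_top_iff_one _).2 fun h => ?_)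
  exact one_ne_zero (apply_eq_zero_of_mem_span_coordFn h (x := 0) fun _ _ => rfl)

end CoordinateIdeals

theorem coord_isRegularSequence_general (n k : ℕ) (hk : k ≤ n) :
    (∀ i : ℕ, (hi : i < k) →
      Ideal.Quotient.mk (Ideal.span (coordFn n '' {j : Fin n | (j : ℕ) < i}))
          (coordFn n ⟨i, lt_of_lt_of_le hi hk⟩) ∈
        nonZeroDivisors
          ((SmoothAlg (Fin n → ℝ)) ⧸ Ideal.span (coordFn n '' {j : Fin n | (j : ℕ) < i}))) ∧
    Nontrivial
      ((SmoothAlg (Fin n → ℝ)) ⧸ Ideal.span (coordFn n '' {j : Fin n | (j : ℕ) < k})) :=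
  ⟨fun i _ => mk_coordFn_mem_nonZeroDivisors (lt_irrefl i), nontrivial_quotient_span_coordFn⟩

/-- For `1 ≤ k ≤ n`, the coordinate functions `x₁, …, x_k` form a regular sequence in
`C^∞(ℝⁿ)`: for each `0 ≤ i < k`, the image of `x_{i+1}` in the quotient
`C^∞(ℝⁿ)/(x₁, …, x_i)` is not a zero divisor, and `C^∞(ℝⁿ)/(x₁, …, x_k)` is not the
zero ring. -/
theorem coord_isRegularSequence (n k : ℕ) (hk1 : 1 ≤ k) (hk : k ≤ n) :
    (∀ i : ℕ, (hi : i < k) →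
      Ideal.Quotient.mk (Ideal.span (coordFn n '' {j : Fin n | (j : ℕ) < i}))
          (coordFn n ⟨i, lt_of_lt_of_le hi hk⟩) ∈
        nonZeroDivisors
          ((SmoothAlg (Fin n → ℝ)) ⧸ Ideal.span (coordFn n '' {j : Fin n | (j : ℕ) < i}))) ∧
    Nontrivial
      ((SmoothAlg (Fin n → ℝ)) ⧸ Ideal.span (coordFn n '' {j : Fin n | (j : ℕ) < k})) :=
  coord_isRegularSequence_general n k hk
end

section
/- The map from ℝ to the set of unital ring homomorphisms C^∞(ℝ) → ℝ, sending a point p to the evaluation homomorphism f ↦ f(p), is a bijection: distinct points give distinct homomorphisms, and every unital ring homomorphism C^∞(ℝ) → ℝ is evaluation at some point of ℝ. -/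
/-- Evaluation at a point `p ∈ ℝ`, as a ring homomorphism `C^∞(ℝ) → ℝ`. -/
noncomputable def evalAt (p : ℝ) : SmoothAlg ℝ →+* ℝ :=
  (Pi.evalRingHom (fun _ : ℝ => ℝ) p).comp (SmoothAlg ℝ).val.toRingHom

/-!
A ring homomorphism `φ : C^∞(ℝ) → ℝ` fixes the constants, since `ℝ` has no nontrivial ring
endomorphisms. Smooth functions without zeros are invertible, so every function in the kernel
of `φ` has a zero. Applied to `(x - φ x)² + (f - φ f)²`, with `x` the identity function, this
produces a point `p` with `p = φ x` and `f p = φ f`, i.e. `φ` is evaluation at `φ x`;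
evaluating the identity function separates points.
-/

namespace SmoothAlg

variable {E : Type} [NormedAddCommGroup E] [NormedSpace ℝ E]

theorem isUnit_of_forall_ne_zero {f : SmoothAlg E} (hf : ∀ x, (f : E → ℝ) x ≠ 0) :
    IsUnit f := by
  let g : SmoothAlg E := ⟨fun x => ((f : E → ℝ) x)⁻¹, (mem_smoothAlg.mp f.2).inv hf⟩
  refine IsUnit.of_mul_eq_one g (Subtype.ext (funext fun x => ?_))
  exact mul_inv_cancel₀ (hf x)

theorem exists_eq_zero_of_ringHom_eq_zero (φ : SmoothAlg E →+* ℝ) {f : SmoothAlg E}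
    (hf : φ f = 0) : ∃ x, (f : E → ℝ) x = 0 := by
  by_contra! h
  simpa [hf] using (isUnit_of_forall_ne_zero h).map φ

theorem ringHom_algebraMap (φ : SmoothAlg E →+* ℝ) (r : ℝ) :
    φ (algebraMap ℝ (SmoothAlg E) r) = r :=
  RingHom.congr_fun (Subsingleton.elim (φ.comp (algebraMap ℝ (SmoothAlg E))) (RingHom.id ℝ)) r

theorem exists_apply_eq_ringHom (φ : SmoothAlg E →+* ℝ) (f g : SmoothAlg E) :
    ∃ x, (f : E → ℝ) x = φ f ∧ (g : E → ℝ) x = φ g := by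
  let C := algebraMap ℝ (SmoothAlg E)
  obtain ⟨x, hx⟩ := exists_eq_zero_of_ringHom_eq_zero φ
    (f := (f - C (φ f)) ^ 2 + (g - C (φ g)) ^ 2) (by simp [C, ringHom_algebraMap])
  have hx' : ((f : E → ℝ) x - φ f) ^ 2 + ((g : E → ℝ) x - φ g) ^ 2 = 0 := hx
  refine ⟨x, ?_, ?_⟩ <;> nlinarith [sq_nonneg ((f : E → ℝ) x - φ f),
    sq_nonneg ((g : E → ℝ) x - φ g)]

def idFun : SmoothAlg ℝ := ⟨id, mem_smoothAlg.mpr contDiff_id⟩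

end SmoothAlg

/-- The map sending a point `p ∈ ℝ` to the evaluation homomorphism `f ↦ f p` is a bijection
from `ℝ` onto the set of unital ring homomorphisms `C^∞(ℝ) → ℝ`: distinct points give
distinct homomorphisms, and every unital ring homomorphism `C^∞(ℝ) → ℝ` is evaluation at a
point. -/
theorem evalAt_bijective : Function.Bijective evalAt := by
  refine ⟨fun p q h => RingHom.congr_fun h SmoothAlg.idFun, fun φ => ⟨φ SmoothAlg.idFun, ?_⟩⟩
  ext f
  obtain ⟨p, hp, hfp⟩ := SmoothAlg.exists_apply_eq_ringHom φ SmoothAlg.idFun f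
  change p = _ at hp
  rw [← hp]
  exact hfp
end
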